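/- arXiv:2204.12321 — 7 statements merged into one kernel-verified Lean document; each statement's English description precedes it below -/
import Mathlib

section
/- In a lattice-normed Riesz space, an order bounded sequence is statistically unbounded p-convergent to x if and only if it is statistically p-convergent to x. -/
open Filter Set
open scoped Classical

/-- The ratio `|{k < n : k ∈ K}| / n`, whose limit (when it exists) is the natural density. -/
noncomputable def natDensityRatio (K : Set ℕ) : ℕ → ℝ :=
  fun n => (((Finset.range n).filter (· ∈ K)).card : ℝ) / n

/-- `K ⊆ ℕ` has natural density one. -/
def HasDensityOne (K : Set ℕ) : Prop :=
  Tendsto (natDensityRatio K) atTop (nhds 1)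

/-- `K ⊆ ℕ` has natural density zero. -/
def HasDensityZero (K : Set ℕ) : Prop :=
  Tendsto (natDensityRatio K) atTop (nhds 0)

section Defs

variable {X E : Type*} [Lattice X] [AddCommGroup X] [Lattice E] [AddCommGroup E]

/-- A sequence is statistically decreasing to `0`: along an index set of density one it is
decreasing with infimum `0`. -/
def StatDecrToZero (a : ℕ → E) : Prop :=
  ∃ K : Set ℕ, HasDensityOne K ∧
    (∀ ⦃i⦄, i ∈ K → ∀ ⦃j⦄, j ∈ K → i ≤ j → a j ≤ a i) ∧
    IsGLB (a '' K) 0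

/-- A sequence `(q_n)` in `X` is statistically `p`-decreasing to `0`. -/
def StatPDecr (p : X → E) (q : ℕ → X) : Prop :=
  StatDecrToZero (fun n => p (q n))

/-- Statistical `p`-convergence of `(x_n)` to `x₀` in a lattice-normed Riesz space. -/
def StatPTendsto (p : X → E) (x : ℕ → X) (x₀ : X) : Prop :=
  ∃ q : ℕ → X, StatPDecr p q ∧
    ∃ K : Set ℕ, HasDensityOne K ∧ ∀ k ∈ K, p (x k - x₀) ≤ p (q k)

/-- Statistically unbounded `p`-convergence of `(x_n)` to `x₀`. -/
def StatUPTendsto (p : X → E) (x : ℕ → X) (x₀ : X) : Prop :=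
  ∀ u : X, 0 ≤ u → ∃ q : ℕ → X, StatPDecr p q ∧
    ∃ K : Set ℕ, HasDensityOne K ∧ ∀ k ∈ K, p (|x k - x₀| ⊓ u) ≤ p (q k)

/-- Order convergence to zero: domination by a decreasing sequence with infimum `0`. -/
def OrderTendstoZero (a : ℕ → E) : Prop :=
  ∃ q : ℕ → E, Antitone q ∧ IsGLB (Set.range q) 0 ∧ ∀ n, |a n| ≤ q n

end Defs

variable {X E : Type*} [Lattice X] [AddCommGroup X] [Module ℝ X]
  [CovariantClass X X (· + ·) (· ≤ ·)]
  [Lattice E] [AddCommGroup E] [Module ℝ E]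
  [CovariantClass E E (· + ·) (· ≤ ·)]

/-- For order bounded sequences, st-up-convergence and st-p-convergence coincide. -/
theorem statUPTendsto_iff_statPTendsto_of_orderBounded
    (p : X → E)
    (hp_pos : ∀ a : X, 0 ≤ p a)
    (hp_eq : ∀ a : X, p a = 0 ↔ a = 0)
    (hp_smul : ∀ (l : ℝ) (a : X), p (l • a) = |l| • p a)
    (hp_add : ∀ a b : X, p (a + b) ≤ p a + p b)
    (hp_mono : ∀ a b : X, |a| ≤ |b| → p a ≤ p b)
    (x : ℕ → X) (x₀ : X)
    (hbdd : ∃ w : X, ∀ n, |x n| ≤ w) :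
    StatUPTendsto p x x₀ ↔ StatPTendsto p x x₀ := by
  constructor
  · intro h
    obtain ⟨w, hw⟩ := hbdd
    have habs : ∀ k, |x k - x₀| ≤ w + |x₀| := fun k =>
      by
        have : |x k - x₀| ≤ |x k| + |x₀| := by
          have h := abs_add_le (x k) (-x₀)
          rw [abs_neg] at h
          rw [sub_eq_add_neg]
          exact h
        exact this.trans (add_le_add (hw k) le_rfl)
    have hu : (0:X) ≤ w + |x₀| :=
      add_nonneg ((abs_nonneg (x 0)).trans (hw 0)) (abs_nonneg x₀)
    obtain ⟨q, hq, K, hK, hle⟩ := h (w + |x₀|) hu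
    refine ⟨q, hq, K, hK, fun k hk => ?_⟩
    have h1 : |x k - x₀| ⊓ (w + |x₀|) = |x k - x₀| := inf_eq_left.mpr (habs k)
    have h2 : p (x k - x₀) ≤ p (|x k - x₀| ⊓ (w + |x₀|)) := by
      rw [h1]; exact hp_mono _ _ (le_of_eq (abs_abs _).symm)
    exact h2.trans (hle k hk)
  · intro h u hu
    obtain ⟨q, hq, K, hK, hle⟩ := h
    refine ⟨q, hq, K, hK, fun k hk => ?_⟩
    have hnn : (0:X) ≤ |x k - x₀| ⊓ u := le_inf (abs_nonneg _) hu
    have : p (|x k - x₀| ⊓ u) ≤ p (x k - x₀) := by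
      apply hp_mono
      rw [abs_of_nonneg hnn]
      exact inf_le_left
    exact this.trans (hle k hk)
end

section
/- Any monotone statistically unbounded p-convergent sequence in a lattice-normed Riesz space is order convergent to its st-up-limit; in particular, if x_n is decreasing and x_n →^{st-up} x, then x_n ↓ x (x is the infimum of the x_n). -/
open Filter Set
open scoped Classical

variable {X E : Type*} [Lattice X] [AddCommGroup X] [Module ℝ X]
  [CovariantClass X X (· + ·) (· ≤ ·)]
  [Lattice E] [AddCommGroup E] [Module ℝ E]
  [CovariantClass E E (· + ·) (· ≤ ·)]

lemma densityOne_inter_unbounded {K K' : Set ℕ} (hK : HasDensityOne K)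
    (hK' : HasDensityOne K') (M : ℕ) : ∃ k, M ≤ k ∧ k ∈ K ∧ k ∈ K' := by
  by_contra h
  push_neg at h
  have key : ∀ n, (((Finset.range n).filter (· ∈ K)).card : ℕ)
      + ((Finset.range n).filter (· ∈ K')).card ≤ n + M := by
    intro n
    set A := (Finset.range n).filter (· ∈ K)
    set B := (Finset.range n).filter (· ∈ K')
    have hsub : A ∩ B ⊆ Finset.range M := by
      intro k hk
      simp only [A, B, Finset.mem_inter, Finset.mem_filter, Finset.mem_range] at hk ⊢
      by_contra hkM
      push_neg at hkM
      exact h k hkM hk.1.2 hk.2.2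
    have h1 : (A ∪ B).card ≤ n := by
      have : A ∪ B ⊆ Finset.range n :=
        Finset.union_subset (Finset.filter_subset _ _) (Finset.filter_subset _ _)
      simpa using Finset.card_le_card this
    have h2 : (A ∩ B).card ≤ M := by simpa using Finset.card_le_card hsub
    have := Finset.card_union_add_card_inter A B
    omega
  have hle : ∀ n : ℕ, natDensityRatio K n + natDensityRatio K' n ≤ 1 + (M : ℝ) / n := by
    intro n
    rcases Nat.eq_zero_or_pos n with rfl | hn
    · simp [natDensityRatio]
    have hn' : (0 : ℝ) < n := by exact_mod_cast hn
    have := key n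
    rw [natDensityRatio, natDensityRatio, ← add_div]
    have h1 : ((((Finset.range n).filter (· ∈ K)).card : ℝ)
        + ((Finset.range n).filter (· ∈ K')).card) ≤ (n : ℝ) + M := by
      exact_mod_cast this
    calc _ ≤ ((n : ℝ) + M) / n := by
            exact div_le_div_of_nonneg_right h1 hn'.le |>.trans_eq rfl
      _ = 1 + (M : ℝ) / n := by field_simp
  have hlim : Tendsto (fun n : ℕ => natDensityRatio K n + natDensityRatio K' n)
      atTop (nhds 2) := by
    have := hK.add hK'
    norm_num at this
    exact this
  have hlim' : Tendsto (fun n : ℕ => 1 + (M : ℝ) / n) atTop (nhds 1) := by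
    have : Tendsto (fun n : ℕ => (M : ℝ) / n) atTop (nhds 0) :=
      tendsto_const_div_atTop_nhds_zero_nat (M : ℝ)
    simpa using tendsto_const_nhds.add this
  have : (2 : ℝ) ≤ 1 :=
    le_of_tendsto_of_tendsto' hlim hlim' hle
  linarith

lemma stup_key {X E : Type*} [Lattice X] [AddCommGroup X]
    [CovariantClass X X (· + ·) (· ≤ ·)]
    [Lattice E] [AddCommGroup E]
    (p : X → E)
    (hp_pos : ∀ a : X, 0 ≤ p a)
    (hp_eq : ∀ a : X, p a = 0 ↔ a = 0)
    (x : ℕ → X) (x₀ : X)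
    (hx : StatUPTendsto p x x₀)
    (u : X) (hu : 0 ≤ u) (N : ℕ)
    (hub : ∀ k, N ≤ k → u ≤ |x k - x₀|) : u = 0 := by
  obtain ⟨q, ⟨K', hK'd, hK'mono, hK'glb⟩, K, hKd, hbound⟩ := hx u hu
  have hlb : ∀ e ∈ (fun n => p (q n)) '' K', p u ≤ e := by
    rintro e ⟨j, hj, rfl⟩
    obtain ⟨k, hk, hkK, hkK'⟩ := densityOne_inter_unbounded hKd hK'd (max N j)
    have hNk : N ≤ k := le_trans (le_max_left _ _) hk
    have hjk : j ≤ k := le_trans (le_max_right _ _) hk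
    have h1 : |x k - x₀| ⊓ u = u := inf_eq_right.mpr (hub k hNk)
    have h2 : p u ≤ p (q k) := by
      have := hbound k hkK
      rwa [h1] at this
    exact h2.trans (hK'mono hj hkK' hjk)
  have : p u ≤ 0 := hK'glb.2 hlb
  exact (hp_eq u).mp (le_antisymm this (hp_pos u))

/-- A decreasing st-up-convergent sequence order converges (decreases) to its st-up-limit. -/
theorem statUPTendsto_antitone_isGLB
    (p : X → E)
    (hp_pos : ∀ a : X, 0 ≤ p a)
    (hp_eq : ∀ a : X, p a = 0 ↔ a = 0)
    (hp_smul : ∀ (l : ℝ) (a : X), p (l • a) = |l| • p a)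
    (hp_add : ∀ a b : X, p (a + b) ≤ p a + p b)
    (hp_mono : ∀ a b : X, |a| ≤ |b| → p a ≤ p b)
    (x : ℕ → X) (x₀ : X)
    (hmono : Antitone x)
    (hx : StatUPTendsto p x x₀) :
    IsGLB (Set.range x) x₀ := by
  constructor
  · rintro _ ⟨n, rfl⟩
    have h0 : (x₀ - x n) ⊔ 0 = 0 := by
      apply stup_key p hp_pos hp_eq x x₀ hx _ le_sup_right n
      intro k hk
      have h1 : x₀ - x n ≤ x₀ - x k := by
        have := hmono hk
        simp only [sub_le_sub_iff_left]
        exact this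
      have h2 : (x₀ - x n) ⊔ 0 ≤ (x₀ - x k) ⊔ 0 :=
        sup_le_sup_right h1 0
      refine h2.trans (sup_le ?_ (abs_nonneg _))
      rw [abs_sub_comm]
      exact le_abs_self _
    have : x₀ - x n ≤ 0 := by
      have := le_sup_left (a := x₀ - x n) (b := (0 : X))
      rw [h0] at this
      exact this
    exact sub_nonpos.mp this
  · intro y hy
    have h0 : (y - x₀) ⊔ 0 = 0 := by
      apply stup_key p hp_pos hp_eq x x₀ hx _ le_sup_right 0
      intro k _
      have h1 : y - x₀ ≤ x k - x₀ := by
        have := hy ⟨k, rfl⟩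
        simp only [sub_le_sub_iff_right]
        exact this
      have h2 : (y - x₀) ⊔ 0 ≤ (x k - x₀) ⊔ 0 :=
        sup_le_sup_right h1 0
      exact h2.trans (sup_le (le_abs_self _) (abs_nonneg _))
    have : y - x₀ ≤ 0 := by
      have := le_sup_left (a := y - x₀) (b := (0 : X))
      rw [h0] at this
      exact this
    have := sub_nonpos.mp this
    exact this
end

section
/- A monotone statistically unbounded p-convergent sequence in a lattice-normed Riesz space is statistically p-convergent to the same limit: if (x_n) is monotone (say 0 ≤ x_n increasing) and x_n →^{st-up} x, then x_n →^{st-p} x. -/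
open Filter Set
open scoped Classical

variable {X E : Type*} [Lattice X] [AddCommGroup X] [Module ℝ X]
  [CovariantClass X X (· + ·) (· ≤ ·)]
  [Lattice E] [AddCommGroup E] [Module ℝ E]
  [CovariantClass E E (· + ·) (· ≤ ·)]

/-- Two density-one sets intersect arbitrarily far out. -/
lemma exists_ge_mem_inter_of_densityOne {K K' : Set ℕ}
    (hK : HasDensityOne K) (hK' : HasDensityOne K') (m : ℕ) :
    ∃ k, m ≤ k ∧ k ∈ K ∧ k ∈ K' := by
  by_contra h
  push_neg at h
  have hle : ∀ᶠ n in atTop,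
      natDensityRatio K n + natDensityRatio K' n ≤ 1 + (m : ℝ) / n := by
    filter_upwards [eventually_ge_atTop 1] with n hn
    have hn' : (0 : ℝ) < n := by exact_mod_cast hn
    set A := (Finset.range n).filter (· ∈ K) with hA
    set B := (Finset.range n).filter (· ∈ K') with hB
    have hcard : A.card + B.card ≤ n + m := by
      have h1 : (A ∪ B).card ≤ n := by
        have hsub : A ∪ B ⊆ Finset.range n := by
          apply Finset.union_subset <;> exact Finset.filter_subset _ _
        simpa using Finset.card_le_card hsub
      have h2 : (A ∩ B).card ≤ m := by
        have hsub : A ∩ B ⊆ Finset.range m := by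
          intro k hk
          simp only [hA, hB, Finset.mem_inter, Finset.mem_filter, Finset.mem_range] at hk ⊢
          by_contra hkm
          exact h k (le_of_not_gt hkm) hk.1.2 hk.2.2
        simpa using Finset.card_le_card hsub
      calc A.card + B.card = (A ∪ B).card + (A ∩ B).card :=
            (Finset.card_union_add_card_inter A B).symm
        _ ≤ n + m := add_le_add h1 h2
    have hcast : (A.card : ℝ) + B.card ≤ (n : ℝ) + m := by exact_mod_cast hcard
    have : ((A.card : ℝ) + B.card) / n ≤ ((n : ℝ) + m) / n := by gcongr
    calc natDensityRatio K n + natDensityRatio K' n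
        = ((A.card : ℝ) + B.card) / n := by
          simp [natDensityRatio, ← hA, ← hB, ← add_div]
      _ ≤ ((n : ℝ) + m) / n := this
      _ = 1 + (m : ℝ) / n := by field_simp
  have hsum : Tendsto (fun n => natDensityRatio K n + natDensityRatio K' n)
      atTop (nhds 2) := by
    have := hK.add hK'
    norm_num at this
    exact this
  have hlim : Tendsto (fun n : ℕ => 1 + (m : ℝ) / n) atTop (nhds 1) := by
    have h0 : Tendsto (fun n : ℕ => (m : ℝ) / n) atTop (nhds 0) :=
      tendsto_const_div_atTop_nhds_zero_nat (m : ℝ)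
    have h1 : Tendsto (fun _ : ℕ => (1 : ℝ)) atTop (nhds 1) := tendsto_const_nhds
    simpa using h1.add h0
  have : (2 : ℝ) ≤ 1 := le_of_tendsto_of_tendsto hsum hlim hle
  linarith

/-- A positive increasing st-up-convergent sequence is statistically p-convergent
to the same limit. -/
theorem statUPTendsto_monotone_statPTendsto
    (p : X → E)
    (hp_pos : ∀ a : X, 0 ≤ p a)
    (hp_eq : ∀ a : X, p a = 0 ↔ a = 0)
    (hp_smul : ∀ (l : ℝ) (a : X), p (l • a) = |l| • p a)
    (hp_add : ∀ a b : X, p (a + b) ≤ p a + p b)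
    (hp_mono : ∀ a b : X, |a| ≤ |b| → p a ≤ p b)
    (x : ℕ → X) (x₀ : X)
    (hpos : ∀ n, 0 ≤ x n)
    (hmono : Monotone x)
    (hx : StatUPTendsto p x x₀) :
    StatPTendsto p x x₀ := by
  -- Step 1: every `x m` is below `x₀`.
  have key : ∀ m, x m ≤ x₀ := by
    intro m
    set w : X := (x m - x₀)⁺ with hw
    obtain ⟨q, ⟨K', hK', hanti, hglb⟩, K, hK, hest⟩ := hx w (posPart_nonneg _)
    have hpw : p w ≤ 0 := by
      apply hglb.2
      rintro b ⟨j, hjK', rfl⟩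
      obtain ⟨k, hkm, hkK, hkK'⟩ :=
        exists_ge_mem_inter_of_densityOne hK hK' (max m j)
    -- `w ≤ |x k - x₀|` for this large `k`
      have h1 : w ≤ |x k - x₀| := by
        have hmk : x m ≤ x k := hmono (le_trans (le_max_left m j) hkm)
        have : w ≤ (x k - x₀)⁺ := posPart_mono (sub_le_sub_right hmk x₀)
        refine this.trans (sup_le (le_abs_self _) (abs_nonneg _))
      have heq : |x k - x₀| ⊓ w = w := inf_eq_right.mpr h1
      calc p w = p (|x k - x₀| ⊓ w) := by rw [heq]
        _ ≤ p (q k) := hest k hkK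
        _ ≤ p (q j) := hanti hjK' hkK' (le_trans (le_max_right m j) hkm)
    have hpw0 : p w = 0 := le_antisymm hpw (hp_pos w)
    have : w = 0 := (hp_eq w).mp hpw0
    have : x m - x₀ ≤ 0 := posPart_eq_zero.mp this
    exact sub_nonpos.mp this
  have hx₀ : (0 : X) ≤ x₀ := le_trans (hpos 0) (key 0)
  -- Step 2: apply st-up convergence with `u = x₀`.
  obtain ⟨q, hq, K, hK, hest⟩ := hx x₀ hx₀
  refine ⟨q, hq, K, hK, fun k hk => ?_⟩
  have habs : |x k - x₀| ≤ x₀ := by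
    have h1 : x k - x₀ ≤ 0 := sub_nonpos.mpr (key k)
    rw [abs_of_nonpos h1, neg_sub]
    have h2 : x₀ - x k ≤ x₀ - 0 := sub_le_sub_left (hpos k) x₀
    simpa using h2
  have heq : |x k - x₀| ⊓ x₀ = |x k - x₀| := inf_eq_left.mpr habs
  have := hest k hk
  rw [heq] at this
  calc p (x k - x₀) ≤ p |x k - x₀| := by
        apply hp_mono; rw [abs_abs]
    _ ≤ p (q k) := this
end

section
/- A sequence (x_n) in a lattice-normed Riesz space is statistically unbounded p-convergent to x if and only if there exists a sequence (y_n) with x_n = y_n for almost all n (i.e., δ({n : x_n ≠ y_n}) = 0) such that y_n →^{st-up} x. -/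
open Filter Set
open scoped Classical

variable {X E : Type*} [Lattice X] [AddCommGroup X] [Module ℝ X]
  [CovariantClass X X (· + ·) (· ≤ ·)]
  [Lattice E] [AddCommGroup E] [Module ℝ E]
  [CovariantClass E E (· + ·) (· ≤ ·)]

noncomputable def cnt (K : Set ℕ) (n : ℕ) : ℕ := ((Finset.range n).filter (· ∈ K)).card

lemma natDensityRatio_eq (K : Set ℕ) (n : ℕ) : natDensityRatio K n = (cnt K n : ℝ) / n := rfl

lemma hasDensityZero_empty : HasDensityZero (∅ : Set ℕ) := by
  have : natDensityRatio (∅ : Set ℕ) = fun _ => (0 : ℝ) := by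
    funext n
    simp [natDensityRatio]
  rw [HasDensityZero, this]
  exact tendsto_const_nhds

lemma cnt_eq_card (K : Set ℕ) (n : ℕ) {p : ℕ → Prop} [DecidablePred p]
    (h : ∀ k, k ∈ K ↔ p k) : cnt K n = ((Finset.range n).filter p).card := by
  unfold cnt
  exact congrArg Finset.card (Finset.filter_congr fun k _ => h k)

lemma cnt_compl_add (S : Set ℕ) (n : ℕ) : cnt S n + cnt Sᶜ n = n := by
  rw [cnt_eq_card Sᶜ n (p := fun k => ¬ k ∈ S) fun k => Iff.rfl]
  unfold cnt
  simpa using Finset.card_filter_add_card_filter_not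
    (s := Finset.range n) (p := (· ∈ S))

lemma hasDensityOne_compl {S : Set ℕ} (h : HasDensityZero S) : HasDensityOne Sᶜ := by
  have heq : ∀ n, natDensityRatio Sᶜ n = (n : ℝ) / n - natDensityRatio S n := by
    intro n
    rw [natDensityRatio_eq, natDensityRatio_eq, ← sub_div]
    congr 1
    have := cnt_compl_add S n
    have : (cnt S n : ℝ) + cnt Sᶜ n = n := by exact_mod_cast this
    linarith
  have h1 : Tendsto (fun n : ℕ => (n : ℝ) / n - natDensityRatio S n) atTop (nhds (1 - 0)) := by
    apply Tendsto.sub _ h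
    apply Tendsto.congr' _ tendsto_const_nhds
    filter_upwards [eventually_ge_atTop 1] with n hn
    have : (n : ℝ) ≠ 0 := by positivity
    field_simp
  have := h1.congr (fun n => (heq n).symm)
  simpa [HasDensityOne] using this

lemma cnt_inter_le_left (A B : Set ℕ) (n : ℕ) : cnt (A ∩ B) n ≤ cnt A n := by
  rw [cnt_eq_card (A ∩ B) n (p := fun k => k ∈ A ∧ k ∈ B) fun k => Iff.rfl]
  unfold cnt
  apply Finset.card_le_card
  intro k hk
  rw [Finset.mem_filter] at hk ⊢
  exact ⟨hk.1, hk.2.1⟩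

lemma cnt_add_le (A B : Set ℕ) (n : ℕ) : cnt A n + cnt B n ≤ cnt (A ∩ B) n + n := by
  rw [cnt_eq_card (A ∩ B) n (p := fun k => k ∈ A ∧ k ∈ B) fun k => Iff.rfl]
  unfold cnt
  rw [Finset.filter_and]
  have hkey := Finset.card_inter_add_card_union
    ((Finset.range n).filter (· ∈ A)) ((Finset.range n).filter (· ∈ B))
  have h2 : (((Finset.range n).filter (· ∈ A)) ∪ ((Finset.range n).filter (· ∈ B))).card ≤ n := by
    have hsub : ((Finset.range n).filter (· ∈ A)) ∪ ((Finset.range n).filter (· ∈ B))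
        ⊆ Finset.range n :=
      Finset.union_subset (Finset.filter_subset _ _) (Finset.filter_subset _ _)
    simpa using Finset.card_le_card hsub
  exact le_trans (le_of_eq hkey.symm) (Nat.add_le_add_left h2 _)

lemma hasDensityOne_inter {A B : Set ℕ} (hA : HasDensityOne A) (hB : HasDensityOne B) :
    HasDensityOne (A ∩ B) := by
  have hupper : ∀ n, natDensityRatio (A ∩ B) n ≤ natDensityRatio A n := by
    intro n
    rw [natDensityRatio_eq, natDensityRatio_eq]
    rcases Nat.eq_zero_or_pos n with rfl | hn
    · simp
    · have hn' : (0:ℝ) < n := by exact_mod_cast hn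
      gcongr
      exact_mod_cast cnt_inter_le_left A B n
  have hlower : ∀ᶠ n in atTop,
      natDensityRatio A n + natDensityRatio B n - 1 ≤ natDensityRatio (A ∩ B) n := by
    filter_upwards [eventually_ge_atTop 1] with n hn
    have hn' : (0:ℝ) < n := by exact_mod_cast hn
    have hc : (cnt A n : ℝ) + cnt B n - n ≤ (cnt (A ∩ B) n : ℝ) := by
      have := cnt_add_le A B n
      have : (cnt A n : ℝ) + cnt B n ≤ (cnt (A ∩ B) n : ℝ) + n := by exact_mod_cast this
      linarith
    rw [natDensityRatio_eq, natDensityRatio_eq, natDensityRatio_eq]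
    rw [← add_div]
    have h1 : ((cnt A n : ℝ) + cnt B n) / n - 1 = ((cnt A n : ℝ) + cnt B n - n) / n := by
      field_simp
    rw [h1]
    gcongr
  have hlow : Tendsto (fun n => natDensityRatio A n + natDensityRatio B n - 1)
      atTop (nhds 1) := by
    have := (hA.add hB).sub (tendsto_const_nhds (x := (1:ℝ)))
    simpa using this
  exact tendsto_of_tendsto_of_tendsto_of_le_of_le' hlow hA hlower
    (Eventually.of_forall hupper)

/-- st-up-convergence is determined up to alteration on a density-zero set. -/
theorem statUPTendsto_iff_eq_almost_all
    (p : X → E)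
    (hp_pos : ∀ a : X, 0 ≤ p a)
    (hp_eq : ∀ a : X, p a = 0 ↔ a = 0)
    (hp_smul : ∀ (l : ℝ) (a : X), p (l • a) = |l| • p a)
    (hp_add : ∀ a b : X, p (a + b) ≤ p a + p b)
    (hp_mono : ∀ a b : X, |a| ≤ |b| → p a ≤ p b)
    (x : ℕ → X) (x₀ : X) :
    StatUPTendsto p x x₀ ↔
      ∃ y : ℕ → X, HasDensityZero {n | x n ≠ y n} ∧ StatUPTendsto p y x₀ := by
  constructor
  · intro h
    refine ⟨x, ?_, h⟩
    have : {n | x n ≠ x n} = (∅ : Set ℕ) := by ext n; simp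
    rw [this]
    exact hasDensityZero_empty
  · rintro ⟨y, hzero, hy⟩
    intro u hu
    obtain ⟨q, hq, K, hK, hb⟩ := hy u hu
    refine ⟨q, hq, K ∩ {n | x n ≠ y n}ᶜ, hasDensityOne_inter hK (hasDensityOne_compl hzero), ?_⟩
    rintro k ⟨hk, hk'⟩
    have hxy : x k = y k := by
      by_contra hne
      exact hk' hne
    rw [hxy]
    exact hb k hk
end

section
/- An order convergent sequence in an op-continuous lattice-normed Riesz space is statistically unbounded p-convergent to its order limit. -/
open Filter Set
open scoped Classical

variable {X E : Type*} [Lattice X] [AddCommGroup X] [Module ℝ X]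
  [CovariantClass X X (· + ·) (· ≤ ·)]
  [Lattice E] [AddCommGroup E] [Module ℝ E]
  [CovariantClass E E (· + ·) (· ≤ ·)]


lemma hasDensityOne_univ : HasDensityOne (Set.univ : Set ℕ) := by
  have h : ∀ᶠ n in atTop, (1:ℝ) = natDensityRatio (Set.univ : Set ℕ) n := by
    filter_upwards [eventually_gt_atTop 0] with n hn
    simp only [natDensityRatio]
    simp only [Set.mem_univ, Finset.filter_true, Finset.card_range]
    field_simp
  exact Tendsto.congr' h tendsto_const_nhds

/-- An order convergent sequence in an op-continuous LNRS is st-up-convergent to its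
order limit. -/
theorem orderTendsto_statUPTendsto_of_opContinuous
    (p : X → E)
    (hp_pos : ∀ a : X, 0 ≤ p a)
    (hp_eq : ∀ a : X, p a = 0 ↔ a = 0)
    (hp_smul : ∀ (l : ℝ) (a : X), p (l • a) = |l| • p a)
    (hp_add : ∀ a b : X, p (a + b) ≤ p a + p b)
    (hp_mono : ∀ a b : X, |a| ≤ |b| → p a ≤ p b)
    (hop : ∀ y : ℕ → X, OrderTendstoZero y → OrderTendstoZero (fun n => p (y n)))
    (x : ℕ → X) (x₀ : X)
    (hx : OrderTendstoZero (fun n => x n - x₀)) :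
    StatUPTendsto p x x₀ := by
  obtain ⟨q, hq_anti, hq_glb, hq_dom⟩ := hx
  have hq_nonneg : ∀ n, 0 ≤ q n := fun n => le_trans (abs_nonneg _) (hq_dom n)
  -- q order converges to 0
  have hqo : OrderTendstoZero q :=
    ⟨q, hq_anti, hq_glb, fun n => le_of_eq (abs_of_nonneg (hq_nonneg n))⟩
  obtain ⟨r, hr_anti, hr_glb, hr_dom⟩ := hop q hqo
  have hpq_le_r : ∀ n, p (q n) ≤ r n := fun n => le_trans (le_abs_self _) (hr_dom n)
  intro u hu
  refine ⟨q, ?_, Set.univ, hasDensityOne_univ, ?_⟩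
  · refine ⟨Set.univ, hasDensityOne_univ, ?_, ?_⟩
    · intro i _ j _ hij
      exact hp_mono _ _ (by
        rw [abs_of_nonneg (hq_nonneg j), abs_of_nonneg (hq_nonneg i)]
        exact hq_anti hij)
    · rw [Set.image_univ]
      constructor
      · rintro e ⟨n, rfl⟩
        exact hp_pos _
      · intro b hb
        have : ∀ n, b ≤ r n := fun n => le_trans (hb ⟨n, rfl⟩) (hpq_le_r n)
        exact hr_glb.2 (by rintro e ⟨n, rfl⟩; exact this n)
  · intro k _
    refine hp_mono _ _ ?_
    have h1 : (0:X) ≤ |x k - x₀| ⊓ u := le_inf (abs_nonneg _) hu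
    rw [abs_of_nonneg h1, abs_of_nonneg (hq_nonneg k)]
    exact le_trans inf_le_left (hq_dom k)
end

section
/- A statistically order convergent sequence in an op-continuous lattice-normed Riesz space is statistically unbounded p-convergent to the same limit. -/
open Filter Set
open scoped Classical

variable {X E : Type*} [Lattice X] [AddCommGroup X] [Module ℝ X]
  [CovariantClass X X (· + ·) (· ≤ ·)]
  [Lattice E] [AddCommGroup E] [Module ℝ E]
  [CovariantClass E E (· + ·) (· ≤ ·)]

/-- Statistical order convergence of `(x_n)` to `x₀` in the Riesz space `X`. -/
def StatOrderTendsto (x : ℕ → X) (x₀ : X) : Prop :=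
  ∃ s : ℕ → X, StatDecrToZero s ∧
    ∃ I : Set ℕ, HasDensityOne I ∧ ∀ i ∈ I, |x i - x₀| ≤ s i


lemma infinite_of_hasDensityOne {K : Set ℕ} (hK : HasDensityOne K) : K.Infinite := by
  by_contra hfin
  rw [Set.not_infinite] at hfin
  have h0 : Tendsto (natDensityRatio K) atTop (nhds 0) := by
    have hub : ∀ n, natDensityRatio K n ≤ (hfin.toFinset.card : ℝ) / n := by
      intro n
      unfold natDensityRatio
      rcases Nat.eq_zero_or_pos n with h | h
      · simp [h]
      · gcongr
        exact fun k hk => by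
          simp only [Finset.mem_filter] at hk
          exact hfin.mem_toFinset.mpr hk.2
    have hlb : ∀ n, 0 ≤ natDensityRatio K n := by
      intro n
      unfold natDensityRatio
      positivity
    refine tendsto_of_tendsto_of_tendsto_of_le_of_le (g := fun _ => (0:ℝ))
      tendsto_const_nhds ?_ hlb hub
    simpa using (tendsto_const_nhds (x := (hfin.toFinset.card : ℝ))).div_atTop
      tendsto_natCast_atTop_atTop
  have := tendsto_nhds_unique hK h0
  norm_num at this

lemma hasDensityOne_inter_s17 {K I : Set ℕ} (hK : HasDensityOne K) (hI : HasDensityOne I) :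
    HasDensityOne (K ∩ I) := by
  have hfilter : ∀ n, (Finset.range n).filter (· ∈ K ∩ I)
      = ((Finset.range n).filter (· ∈ K)) ∩ ((Finset.range n).filter (· ∈ I)) := by
    intro n
    rw [← Finset.filter_and]
    apply Finset.filter_congr
    intro k _
    simp [Set.mem_inter_iff]
  have hub : ∀ n, natDensityRatio (K ∩ I) n ≤ natDensityRatio K n := by
    intro n
    unfold natDensityRatio
    rcases Nat.eq_zero_or_pos n with h | h
    · simp [h]
    · gcongr
      intro k hk
      simp only [Finset.mem_filter, Set.mem_inter_iff] at *
      exact hk.1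
  have hlb : ∀ n, 1 ≤ n →
      natDensityRatio K n + natDensityRatio I n - 1 ≤ natDensityRatio (K ∩ I) n := by
    intro n hn
    have hnpos : (0:ℝ) < n := by exact_mod_cast hn
    unfold natDensityRatio
    have h1n : (1:ℝ) = (n:ℝ) / n := (div_self (ne_of_gt hnpos)).symm
    have hcard : (((Finset.range n).filter (· ∈ K)).card : ℝ)
        + ((Finset.range n).filter (· ∈ I)).card - n
        ≤ (((Finset.range n).filter (· ∈ K ∩ I)).card : ℝ) := by
      rw [hfilter]
      have h1 := Finset.card_inter_add_card_union
        ((Finset.range n).filter (· ∈ K)) ((Finset.range n).filter (· ∈ I))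
      have h2 : (((Finset.range n).filter (· ∈ K)) ∪ ((Finset.range n).filter (· ∈ I))).card ≤ n := by
        calc _ ≤ (Finset.range n).card :=
              Finset.card_le_card (Finset.union_subset (Finset.filter_subset _ _)
                (Finset.filter_subset _ _))
          _ = n := Finset.card_range n
      have h1' : ((((Finset.range n).filter (· ∈ K)) ∩ ((Finset.range n).filter (· ∈ I))).card : ℝ)
          + ((((Finset.range n).filter (· ∈ K)) ∪ ((Finset.range n).filter (· ∈ I))).card : ℝ)
          = (((Finset.range n).filter (· ∈ K)).card : ℝ)
          + (((Finset.range n).filter (· ∈ I)).card : ℝ) := by exact_mod_cast h1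
      linarith [(by exact_mod_cast h2 :
        ((((Finset.range n).filter (· ∈ K)) ∪ ((Finset.range n).filter (· ∈ I))).card : ℝ) ≤ n)]
    rw [← add_div, h1n, ← sub_div]
    gcongr
    exact hcard.trans_eq (by congr 1; exact congrArg Finset.card (Finset.filter_congr_decidable _ _ _).symm)
  have hlim : Tendsto (fun n => natDensityRatio K n + natDensityRatio I n - 1)
      atTop (nhds 1) := by
    have := (hK.add hI).sub_const 1
    norm_num at this
    exact this
  exact tendsto_of_tendsto_of_tendsto_of_le_of_le' hlim hK
    (Filter.eventually_atTop.mpr ⟨1, hlb⟩)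
    (Filter.Eventually.of_forall hub)

/-- A statistically order convergent sequence in an op-continuous LNRS is st-up-convergent
to the same limit. -/
theorem statOrderTendsto_statUPTendsto_of_opContinuous
    (p : X → E)
    (hp_pos : ∀ a : X, 0 ≤ p a)
    (hp_eq : ∀ a : X, p a = 0 ↔ a = 0)
    (hp_smul : ∀ (l : ℝ) (a : X), p (l • a) = |l| • p a)
    (hp_add : ∀ a b : X, p (a + b) ≤ p a + p b)
    (hp_mono : ∀ a b : X, |a| ≤ |b| → p a ≤ p b)
    (hop : ∀ y : ℕ → X, OrderTendstoZero y → OrderTendstoZero (fun n => p (y n)))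
    (x : ℕ → X) (x₀ : X)
    (hx : StatOrderTendsto x x₀) :
    StatUPTendsto p x x₀ := by
  obtain ⟨s, ⟨K, hKd, hKmono, hKglb⟩, I, hId, hIbound⟩ := hx
  intro u hu
  have hsnn : ∀ k ∈ K, (0:X) ≤ s k := fun k hk => hKglb.1 ⟨k, hk, rfl⟩
  have hqnn : ∀ k ∈ K, (0:X) ≤ s k ⊓ u := fun k hk => le_inf (hsnn k hk) hu
  refine ⟨fun n => s n ⊓ u, ⟨K, hKd, ?_, ?_⟩, K ∩ I, hasDensityOne_inter_s17 hKd hId, ?_⟩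
  · intro i hi j hj hij
    apply hp_mono
    rw [abs_of_nonneg (hqnn j hj), abs_of_nonneg (hqnn i hi)]
    exact inf_le_inf_right u (hKmono hi hj hij)
  · -- IsGLB of p ∘ (s ⊓ u) over K is 0
    have hKinf : K.Infinite := infinite_of_hasDensityOne hKd
    set e : ℕ → ℕ := Nat.nth (· ∈ K) with he
    have hemem : ∀ n, e n ∈ K := fun n => Nat.nth_mem_of_infinite hKinf n
    have hemono : Monotone e := (Nat.nth_strictMono hKinf).monotone
    have herange : Set.range e = K := Nat.range_nth_of_infinite hKinf
    set y : ℕ → X := fun n => s (e n) ⊓ u with hy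
    have hyanti : Antitone y := fun i j hij =>
      inf_le_inf_right u (hKmono (hemem i) (hemem j) (hemono hij))
    have hynn : ∀ n, (0:X) ≤ y n := fun n => hqnn _ (hemem n)
    have hyglb : IsGLB (Set.range y) 0 := by
      constructor
      · rintro z ⟨n, rfl⟩; exact hynn n
      · intro b hb
        have hb' : b ∈ lowerBounds (s '' K) := by
          rintro z ⟨k, hk, rfl⟩
          obtain ⟨n, hn⟩ := herange.symm ▸ hk
          calc b ≤ y n := hb ⟨n, rfl⟩
            _ ≤ s (e n) := inf_le_left
            _ = s k := by rw [hn]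
        exact hKglb.2 hb'
    have hord : OrderTendstoZero y :=
      ⟨y, hyanti, hyglb, fun n => le_of_eq (abs_of_nonneg (hynn n))⟩
    obtain ⟨r, hranti, hrglb, hrdom⟩ := hop y hord
    have hrdom' : ∀ n, p (y n) ≤ r n := fun n => by
      have := hrdom n
      rwa [abs_of_nonneg (hp_pos _)] at this
    constructor
    · rintro z ⟨k, _, rfl⟩; exact hp_pos _
    · intro b hb
      have hb' : b ∈ lowerBounds (Set.range r) := by
        rintro z ⟨n, rfl⟩
        calc b ≤ p (y n) := hb ⟨e n, hemem n, rfl⟩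
          _ ≤ r n := hrdom' n
      exact hrglb.2 hb'
  · rintro k ⟨hkK, hkI⟩
    apply hp_mono
    rw [abs_of_nonneg (le_inf (abs_nonneg _) hu), abs_of_nonneg (hqnn k hkK)]
    exact inf_le_inf_right u (hIbound k hkI)
end

section
/- Band projections preserve statistical unbounded p-convergence: if B is a projection band in a lattice-normed Riesz space X with band projection P_B, and x_n →^{st-up} x, then P_B(x_n) →^{st-up} P_B(x). -/
open Filter Set
open scoped Classical

variable {X E : Type*} [Lattice X] [AddCommGroup X] [Module ℝ X]
  [CovariantClass X X (· + ·) (· ≤ ·)]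
  [Lattice E] [AddCommGroup E] [Module ℝ E]
  [CovariantClass E E (· + ·) (· ≤ ·)]

/-- A band projection preserves statistical unbounded p-convergence. -/
theorem statUPTendsto_bandProjection
    (p : X → E)
    (hp_pos : ∀ a : X, 0 ≤ p a)
    (hp_eq : ∀ a : X, p a = 0 ↔ a = 0)
    (hp_smul : ∀ (l : ℝ) (a : X), p (l • a) = |l| • p a)
    (hp_add : ∀ a b : X, p (a + b) ≤ p a + p b)
    (hp_mono : ∀ a b : X, |a| ≤ |b| → p a ≤ p b)
    (B : Set X) (P : X → X)
    (hPB : ∀ z, P z ∈ B)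
    (hPsub : ∀ a b : X, P (a - b) = P a - P b)
    (hPsup : ∀ a b : X, P (a ⊔ b) = P a ⊔ P b)
    (hPpos : ∀ z : X, 0 ≤ z → 0 ≤ P z ∧ P z ≤ z)
    (x : ℕ → X) (x₀ : X)
    (hx : StatUPTendsto p x x₀) :
    StatUPTendsto p (fun n => P (x n)) (P x₀) := by
  intro u hu
  obtain ⟨q, hq, K, hK, hbound⟩ := hx u hu
  have hP0 : P 0 = 0 := by
    have := hPsub 0 0; simpa using this
  have hPneg : ∀ z : X, P (-z) = -P z := by
    intro z
    have := hPsub 0 z; simpa [hP0] using this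
  have habs : ∀ z : X, |P z| ≤ |z| := by
    intro z
    have h1 : P |z| = |P z| := by
      have e : ∀ w : X, |w| = w ⊔ -w := fun w => rfl
      rw [e, hPsup, hPneg, e]
    calc |P z| = P |z| := h1.symm
      _ ≤ |z| := (hPpos |z| (abs_nonneg z)).2
  refine ⟨q, hq, K, hK, fun k hk => ?_⟩
  have key : |P (x k) - P x₀| ⊓ u ≤ |x k - x₀| ⊓ u := by
    refine inf_le_inf_right u ?_
    rw [← hPsub]
    exact habs _
  have h0 : (0:X) ≤ |P (x k) - P x₀| ⊓ u := le_inf (abs_nonneg _) hu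
  have h0' : (0:X) ≤ |x k - x₀| ⊓ u := le_inf (abs_nonneg _) hu
  have := hp_mono (|P (x k) - P x₀| ⊓ u) (|x k - x₀| ⊓ u)
    (by rw [abs_of_nonneg h0, abs_of_nonneg h0']; exact key)
  exact this.trans (hbound k hk)
end
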